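/- arXiv:1006.4536 — 2 statements merged into one kernel-verified Lean document; each statement's English description precedes it below -/
import Mathlib

section
/- There exist universal constants c₁, c₂ > 0 such that for every d ≥ 1 and every A ⊆ K, the cut function h' of the noise sparsifier H for G_d satisfies c₁ · k · Σ_S (f̂_A)_S² · min(|S|, √d) ≤ h'(A) ≤ c₂ · k · Σ_S (f̂_A)_S² · min(|S|, √d), where the sum is over all subsets S ⊆ {1,…,d} and k = 2^d. -/
open Finset

/-- Vertices of the `d`-dimensional Boolean hypercube. -/
abbrev Cube (d : ℕ) := Fin d → Bool

/-- Hamming distance between two Boolean strings. -/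
def hamm {d : ℕ} (s t : Cube d) : ℕ := (Finset.univ.filter fun i => s i ≠ t i).card

/-- The vertex set of the graph `G_d`: `Sum.inl s` is the hypercube vertex `y_s`,
`Sum.inr s` is the terminal `z_s`. -/
abbrev Vtx (d : ℕ) := Cube d ⊕ Cube d

/-- Edge capacities of the graph `G_d`: hypercube edges (Hamming distance `1`) have
capacity `1`, each terminal `z_s` is attached to `y_s` by an edge of capacity `√d`. -/
noncomputable def gCap (d : ℕ) : Vtx d → Vtx d → ℝ
  | Sum.inl s, Sum.inl t => if hamm s t = 1 then 1 else 0
  | Sum.inl s, Sum.inr t => if s = t then Real.sqrt d else 0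
  | Sum.inr s, Sum.inl t => if s = t then Real.sqrt d else 0
  | Sum.inr _, Sum.inr _ => 0

/-- The cut function of a capacitated graph: total capacity of edges crossing `A`.
(Each unordered crossing edge `{u,v}` with `u ∈ A`, `v ∉ A` is counted once.) -/
noncomputable def cutFun {V : Type*} [Fintype V] [DecidableEq V]
    (c : V → V → ℝ) (A : Finset V) : ℝ :=
  ∑ u ∈ A, ∑ v ∈ Aᶜ, c u v

/-- The terminal set `K = {z_s}` of `G_d`. -/
def Kset (d : ℕ) : Finset (Vtx d) := Finset.univ.image Sum.inr

/-- The terminal cut function: `h_K(U) = min { h(A) : A ∩ K = U }`. -/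
noncomputable def termCut {V : Type*} [Fintype V] [DecidableEq V]
    (c : V → V → ℝ) (K U : Finset V) : ℝ :=
  sInf {x : ℝ | ∃ A : Finset V, A ∩ K = U ∧ cutFun c A = x}

/-- The terminal cut function of `G_d`, for a set `A` of terminals (identified with
Boolean strings). -/
noncomputable def hK (d : ℕ) (A : Finset (Cube d)) : ℝ :=
  termCut (gCap d) (Kset d) (A.image Sum.inr)

/-- The flip probability `p = (1 - ρ)/2` where `ρ = 1 - 1/√d`. -/
noncomputable def noiseP (d : ℕ) : ℝ := (1 - (1 - 1 / Real.sqrt d)) / 2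

/-- Capacities of the noise sparsifier `H`:
`c_H(z_s, z_t) = √d · p^{Hamm(s,t)} · (1-p)^{d - Hamm(s,t)}` for `s ≠ t`. -/
noncomputable def noiseCap (d : ℕ) (s t : Cube d) : ℝ :=
  if s = t then 0
  else Real.sqrt d * noiseP d ^ hamm s t * (1 - noiseP d) ^ (d - hamm s t)

/-- The character `χ_S(x) = Π_{i ∈ S} x_i`, with the Boolean value `true`
interpreted as `-1` and `false` as `+1`. -/
def chi {d : ℕ} (S : Finset (Fin d)) (x : Cube d) : ℝ := ∏ i ∈ S, (if x i then -1 else 1)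

/-- The Fourier coefficient `f̂_S = E_x [f(x) χ_S(x)]`. -/
noncomputable def fCoeff {d : ℕ} (f : Cube d → ℝ) (S : Finset (Fin d)) : ℝ :=
  (∑ x : Cube d, f x * chi S x) / 2 ^ d

/-- The `±1`-valued indicator function of a set `A` of terminals. -/
def fA {d : ℕ} (A : Finset (Cube d)) : Cube d → ℝ := fun s => if s ∈ A then 1 else -1

/-!
The capacities of `H` are `√d` times the noise kernel `T_ρ(s, t) = ∏ᵢ (1 + ρ sᵢ tᵢ) / 2`, whose
Fourier expansion is `2⁻ᵈ ∑_S ρ^|S| χ_S(s) χ_S(t)`. As `1 - f_A(s) f_A(t)` is `2` on pairs separated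
by `A` and `0` otherwise, `4 h'(A) = √d ∑_{s,t} T_ρ(s, t) (1 - f_A(s) f_A(t))`, and expanding with
Parseval (`∑_S f̂_S² = 1`) gives `h'(A) = 2ᵈ/4 ∑_S f̂_S² · √d (1 - ρ^|S|)`. Bernoulli's inequality,
applied to `(1 - x)ʲ` and to `(1 - x)ʲ (1 + x)ʲ ≤ 1` with `x = 1/√d`, puts `√d (1 - ρʲ)` between
`min(j, √d) / 2` and `min(j, √d)`.
-/

def boolSign (b : Bool) : ℝ := if b then -1 else 1

lemma boolSign_mul_boolSign (a b : Bool) : boolSign a * boolSign b = if a = b then 1 else -1 := by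
  cases a <;> cases b <;> norm_num [boolSign]

lemma chi_eq_prod_boolSign {d : ℕ} (S : Finset (Fin d)) (x : Cube d) :
    chi S x = ∏ i ∈ S, boolSign (x i) := rfl

section NoiseKernel

variable {d : ℕ}

/-- `T_r(s, t) = ∏ᵢ (1 + r sᵢ tᵢ) / 2` is the probability of reaching `t` from `s` by flipping each
bit independently with probability `(1 - r) / 2`. -/
noncomputable def noiseKernel (r : ℝ) (s t : Cube d) : ℝ :=
  ∏ i, (1 + r * (boolSign (s i) * boolSign (t i))) / 2

lemma noiseKernel_comm (r : ℝ) (s t : Cube d) : noiseKernel r s t = noiseKernel r t s := by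
  simp only [noiseKernel, mul_comm (boolSign (s _))]

lemma noiseKernel_eq_pow_hamm (r : ℝ) (s t : Cube d) :
    noiseKernel r s t = ((1 - r) / 2) ^ hamm s t * ((1 + r) / 2) ^ (d - hamm s t) := by
  have hfactor : ∀ i, (1 + r * (boolSign (s i) * boolSign (t i))) / 2
      = if s i ≠ t i then (1 - r) / 2 else (1 + r) / 2 := by
    intro i
    rw [boolSign_mul_boolSign]
    by_cases h : s i = t i <;> simp [h]; ring
  have hcard : #{i | ¬ s i ≠ t i} = d - hamm s t := by
    have h := card_filter_add_card_filter_not (s := (univ : Finset (Fin d))) (fun i => s i ≠ t i)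
    rw [card_univ, Fintype.card_fin] at h
    rw [hamm]
    omega
  rw [noiseKernel, prod_congr rfl fun i _ => hfactor i, prod_ite, prod_const, prod_const, hcard]
  rfl

lemma noiseKernel_eq_sum_chi (r : ℝ) (s t : Cube d) :
    noiseKernel r s t = ∑ S : Finset (Fin d), r ^ #S * chi S s * chi S t / 2 ^ d := by
  have hfactor : ∀ i, (1 + r * (boolSign (s i) * boolSign (t i))) / 2
      = r * boolSign (s i) * boolSign (t i) / 2 + 1 / 2 := fun i => by ring
  rw [noiseKernel, prod_congr rfl fun i _ => hfactor i, Fintype.prod_add]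
  refine sum_congr rfl fun S _ => ?_
  have hpow : (2 : ℝ) ^ d = 2 ^ #S * 2 ^ #Sᶜ := by
    rw [← pow_add, card_add_card_compl, Fintype.card_fin]
  simp only [div_eq_mul_inv, prod_mul_distrib, prod_const, chi_eq_prod_boolSign]
  rw [hpow, mul_inv, inv_pow, inv_pow, one_pow, one_mul]
  ring

lemma sum_noiseKernel (r : ℝ) (s : Cube d) : ∑ t, noiseKernel r s t = 1 := by
  unfold noiseKernel
  rw [← Fintype.prod_sum (fun i b => (1 + r * (boolSign (s i) * boolSign b)) / 2)]
  refine prod_eq_one fun i _ => ?_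
  cases s i <;> norm_num [boolSign] <;> ring

lemma noiseKernel_one (s t : Cube d) : noiseKernel 1 s t = if s = t then 1 else 0 := by
  have hfactor : ∀ i, (1 + 1 * (boolSign (s i) * boolSign (t i))) / 2
      = if s i = t i then 1 else 0 := by
    intro i; rw [boolSign_mul_boolSign]; split_ifs <;> norm_num
  rw [noiseKernel, prod_congr rfl fun i _ => hfactor i, prod_ite_zero]
  simp [funext_iff]

lemma sum_mul_chi_eq (f : Cube d → ℝ) (S : Finset (Fin d)) :
    ∑ x, f x * chi S x = 2 ^ d * fCoeff f S := by
  rw [fCoeff, mul_div_cancel₀ _ (by positivity)]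

lemma sum_sum_noiseKernel_mul (r : ℝ) (f : Cube d → ℝ) :
    ∑ s, ∑ t, noiseKernel r s t * f s * f t =
      2 ^ d * ∑ S : Finset (Fin d), r ^ #S * fCoeff f S ^ 2 := by
  calc ∑ s, ∑ t, noiseKernel r s t * f s * f t
      = ∑ S : Finset (Fin d), r ^ #S / 2 ^ d * ((∑ s, f s * chi S s) * ∑ t, f t * chi S t) := by
        simp only [noiseKernel_eq_sum_chi, sum_mul, mul_sum]
        rw [sum_comm (s := (univ : Finset (Finset (Fin d))))]
        refine sum_congr rfl fun s _ => ?_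
        rw [sum_comm (s := (univ : Finset (Finset (Fin d))))]
        refine sum_congr rfl fun t _ => sum_congr rfl fun S _ => ?_
        ring
    _ = 2 ^ d * ∑ S : Finset (Fin d), r ^ #S * fCoeff f S ^ 2 := by
        simp_rw [sum_mul_chi_eq, mul_sum]
        refine sum_congr rfl fun S _ => ?_
        field_simp

lemma sum_fCoeff_sq (f : Cube d → ℝ) :
    ∑ S : Finset (Fin d), fCoeff f S ^ 2 = (∑ x, f x ^ 2) / 2 ^ d := by
  have h := sum_sum_noiseKernel_mul 1 f
  simp only [noiseKernel_one, one_pow, one_mul, ite_mul, zero_mul, sum_ite_eq, mem_univ,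
    if_true] at h
  rw [eq_div_iff (by positivity), mul_comm, ← h]
  simp only [sq]

lemma sum_fCoeff_fA_sq (A : Finset (Cube d)) : ∑ S : Finset (Fin d), fCoeff (fA A) S ^ 2 = 1 := by
  have h : ∀ x, fA A x ^ 2 = 1 := fun x => by unfold fA; split_ifs <;> norm_num
  simp [sum_fCoeff_sq, h]

lemma sum_sum_mul_one_sub_fA_mul_fA (w : Cube d → Cube d → ℝ) (hw : ∀ s t, w s t = w t s)
    (A : Finset (Cube d)) :
    ∑ s, ∑ t, w s t * (1 - fA A s * fA A t) = 4 * ∑ u ∈ A, ∑ v ∈ Aᶜ, w u v := by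
  have hcross : ∀ s t, w s t * (1 - fA A s * fA A t) =
      2 * (if s ∈ A then if t ∈ Aᶜ then w s t else 0 else 0) +
      2 * (if t ∈ A then if s ∈ Aᶜ then w t s else 0 else 0) := by
    intro s t
    rw [hw t s]
    unfold fA
    split_ifs <;> simp_all <;> ring
  simp only [hcross, sum_add_distrib, ← mul_sum, sum_ite_irrel, sum_const_zero, sum_ite_mem,
    univ_inter]
  rw [sum_comm (s := Aᶜ)]
  ring

lemma cutFun_noiseCap_eq (A : Finset (Cube d)) :
    cutFun (noiseCap d) A = √d * ∑ u ∈ A, ∑ v ∈ Aᶜ, noiseKernel (1 - 1 / √d) u v := by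
  have hp : 1 - noiseP d = (1 + (1 - 1 / √d)) / 2 := by rw [noiseP]; ring
  rw [cutFun, mul_sum]
  refine sum_congr rfl fun u hu => ?_
  rw [mul_sum]
  refine sum_congr rfl fun v hv => ?_
  have huv : u ≠ v := by rintro rfl; exact mem_compl.mp hv hu
  rw [noiseCap, if_neg huv, noiseKernel_eq_pow_hamm, hp, mul_assoc]
  rfl

lemma cutFun_noiseCap_eq_sum_fCoeff (A : Finset (Cube d)) :
    cutFun (noiseCap d) A =
      2 ^ d / 4 * ∑ S : Finset (Fin d), fCoeff (fA A) S ^ 2 * (√d * (1 - (1 - 1 / √d) ^ #S)) := by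
  rw [cutFun_noiseCap_eq]
  set r := 1 - 1 / √d
  have hcut := sum_sum_mul_one_sub_fA_mul_fA _ (noiseKernel_comm r) A
  have hfourier : ∑ s, ∑ t, noiseKernel r s t * (1 - fA A s * fA A t) =
      2 ^ d * ∑ S : Finset (Fin d), fCoeff (fA A) S ^ 2 * (1 - r ^ #S) := by
    simp only [mul_one_sub, ← mul_assoc, sum_sub_distrib, sum_noiseKernel, sum_sum_noiseKernel_mul,
      sum_fCoeff_fA_sq, mul_comm (r ^ _)]
    simp
  simp_rw [mul_left_comm _ √d, ← mul_sum]
  linear_combination -(√d / 4) * (hfourier.symm.trans hcut)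

end NoiseKernel

lemma one_sub_pow_mul_one_add_mul_le_one {x : ℝ} (h0 : 0 ≤ x) (h1 : x ≤ 1) (j : ℕ) :
    (1 - x) ^ j * (1 + j * x) ≤ 1 :=
  calc (1 - x) ^ j * (1 + j * x) ≤ (1 - x) ^ j * (1 + x) ^ j :=
        mul_le_mul_of_nonneg_left (one_add_mul_le_pow (by linarith) j) (pow_nonneg (by linarith) j)
    _ = (1 - x ^ 2) ^ j := by rw [← mul_pow]; ring
    _ ≤ 1 := pow_le_one₀ (by nlinarith) (by nlinarith)

lemma mul_one_sub_one_sub_div_pow_le_min {q : ℝ} (hq : 1 ≤ q) (j : ℕ) :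
    q * (1 - (1 - 1 / q) ^ j) ≤ min (j : ℝ) q := by
  have hx : 1 / q ≤ 1 := (div_le_one (by linarith)).mpr hq
  have hbernoulli : 1 + j * -(1 / q) ≤ (1 - 1 / q) ^ j := by
    simpa [← sub_eq_add_neg] using one_add_mul_le_pow (a := -(1 / q)) (by linarith) j
  have hpos : 0 ≤ (1 - 1 / q) ^ j := pow_nonneg (by linarith) j
  refine le_min ?_ (by nlinarith)
  calc q * (1 - (1 - 1 / q) ^ j) ≤ q * (j * (1 / q)) := by gcongr; linarith
    _ = j := by field_simp

lemma min_div_two_le_mul_one_sub_one_sub_div_pow {q : ℝ} (hq : 1 ≤ q) (j : ℕ) :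
    min (j : ℝ) q / 2 ≤ q * (1 - (1 - 1 / q) ^ j) := by
  have hx : 1 / q ≤ 1 := (div_le_one (by linarith)).mpr hq
  have h := one_sub_pow_mul_one_add_mul_le_one (by positivity) hx j
  set y := (1 - 1 / q) ^ j
  have hy : y * (q + j) ≤ q := by
    have : y * (q + j) = q * (y * (1 + j * (1 / q))) := by field_simp
    rw [this]; nlinarith
  have hj : (0 : ℝ) ≤ j := j.cast_nonneg
  rcases le_total (j : ℝ) q with hjq | hqj
  · rw [min_eq_left hjq]; nlinarith
  · rw [min_eq_right hqj]; nlinarith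

/-- There are universal constants `c₁, c₂ > 0` such that for every
`d ≥ 1` and every `A ⊆ K`, the cut of the noise sparsifier satisfies
`h'(A) = Θ(k · Σ_S f̂_S² min(|S|, √d))`. -/
theorem noise_sparsifier_cut_fourier :
    ∃ c₁ c₂ : ℝ, 0 < c₁ ∧ 0 < c₂ ∧ ∀ d : ℕ, 1 ≤ d → ∀ A : Finset (Cube d),
      c₁ * 2 ^ d *
          (∑ S : Finset (Fin d), fCoeff (fA A) S ^ 2 * min (S.card : ℝ) (Real.sqrt d))
        ≤ cutFun (noiseCap d) A ∧
      cutFun (noiseCap d) A ≤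
        c₂ * 2 ^ d *
          (∑ S : Finset (Fin d), fCoeff (fA A) S ^ 2 * min (S.card : ℝ) (Real.sqrt d)) := by
  refine ⟨1 / 8, 1 / 4, by norm_num, by norm_num, fun d hd A => ?_⟩
  have hq : 1 ≤ √(d : ℝ) := Real.one_le_sqrt.mpr (by exact_mod_cast hd)
  rw [cutFun_noiseCap_eq_sum_fCoeff, mul_sum, mul_sum, mul_sum]
  constructor <;> refine sum_le_sum fun S _ => ?_
  · calc 1 / 8 * 2 ^ d * (fCoeff (fA A) S ^ 2 * min (#S : ℝ) √d)
        = 2 ^ d / 4 * (fCoeff (fA A) S ^ 2 * (min (#S : ℝ) √d / 2)) := by ring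
      _ ≤ _ := by gcongr; exact min_div_two_le_mul_one_sub_one_sub_div_pow hq #S
  · calc 2 ^ d / 4 * (fCoeff (fA A) S ^ 2 * (√d * (1 - (1 - 1 / √d) ^ #S)))
        ≤ 2 ^ d / 4 * (fCoeff (fA A) S ^ 2 * min (#S : ℝ) √d) := by
          gcongr; exact mul_one_sub_one_sub_div_pow_le_min hq #S
      _ = _ := by ring
end

section
/- There exist universal constants c₁, c₂ > 0 such that for every d ≥ 1 and every j with 1 ≤ j ≤ d, the sub-cube cut in G_d satisfies c₁·2^{d−j}·min(j, √d) ≤ h_K(A_j) ≤ c₂·2^{d−j}·min(j, √d), where A_j = {z_s : s_1 = s_2 = ⋯ = s_j = 0} ⊆ K; that is, the minimum cut in G_d separating A_j from K − A_j has capacity Θ(|A_j| · min(j, √d)). -/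
open Finset

/-- The sub-cube cut `A_j`: terminals whose first `j` coordinates are `0`. -/
def subCubeCut (d j : ℕ) : Finset (Cube d) :=
  Finset.univ.filter fun s => ∀ i : Fin d, (i : ℕ) < j → s i = false

/-! `h_K(A_j) = 2^{d-j} · min(j, √d)` exactly. Split a vertex set as `Y ⊔ Z` into its cube part
and its terminal part: its cut is the edge boundary of `Y` in the hypercube plus `√d · |Y Δ Z|`.
For `Z = A_j`, the choices `Y = A_j` and `Y = ∅` give cuts of size `2^{d-j} · j` and
`2^{d-j} · √d`. Conversely, for any `Y` every `s ∈ A_j \ Y` pays `√d`, and every `s ∈ A_j ∩ Y`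
pays at least `j`: for each of the first `j` coordinates `i`, either the edge from `s` to its
neighbour `t` in direction `i` leaves `Y`, or `t ∈ Y \ A_j` pays `√d ≥ 1`. No two pairs `(s, i)`
share a charge, because `i` is the only one of the first `j` coordinates set in `t`. -/

namespace Cube

variable {d j : ℕ}

def toggle (i : Fin d) (s : Cube d) : Cube d := Function.update s i (!s i)

@[simp] lemma toggle_apply_self (i : Fin d) (s : Cube d) : toggle i s i = !s i := by
  simp [toggle]

@[simp] lemma toggle_apply_of_ne {i k : Fin d} (s : Cube d) (h : k ≠ i) :
    toggle i s k = s k := by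
  simp [toggle, h]

lemma toggle_left_injective (s : Cube d) : Function.Injective fun i : Fin d => toggle i s := by
  intro i i' h
  by_contra hne
  simpa [hne] using congrFun h i

lemma hamm_toggle (i : Fin d) (s : Cube d) : hamm s (toggle i s) = 1 := by
  rw [hamm, card_eq_one]
  refine ⟨i, ext fun k => ?_⟩
  by_cases hk : k = i <;> simp [hk]

lemma exists_toggle_of_hamm_eq_one {s t : Cube d} (h : hamm s t = 1) :
    ∃ i, t = toggle i s := by
  obtain ⟨i, hi⟩ := card_eq_one.mp h
  refine ⟨i, funext fun k => ?_⟩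
  have hk := Finset.ext_iff.mp hi k
  simp only [mem_filter, mem_univ, true_and, mem_singleton] at hk
  by_cases hki : k = i
  · subst hki
    simpa using (Bool.eq_not_iff.mpr (hk.mpr rfl)).symm
  · simpa [hki, eq_comm] using hk

def firstCoords (d j : ℕ) : Finset (Fin d) := {i | (i : ℕ) < j}

@[simp] lemma mem_firstCoords {i : Fin d} : i ∈ firstCoords d j ↔ (i : ℕ) < j := by
  simp [firstCoords]

lemma card_firstCoords (hj : j ≤ d) : #(firstCoords d j) = j := by
  rw [firstCoords, Fin.card_filter_val_lt, min_eq_right hj]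

lemma card_subCubeCut (hj : j ≤ d) : #(subCubeCut d j) = 2 ^ (d - j) := by
  have hpi : subCubeCut d j =
      Fintype.piFinset fun i : Fin d => if i ∈ firstCoords d j then {false} else univ := by
    ext s
    simp only [subCubeCut, mem_filter, mem_univ, true_and, Fintype.mem_piFinset]
    refine forall_congr' fun i => ?_
    split_ifs <;> simp_all
  have hcompl := card_filter_add_card_filter_not (s := univ) (· ∈ firstCoords d j)
  rw [filter_mem_eq_inter, univ_inter, card_firstCoords hj, card_univ, Fintype.card_fin]
    at hcompl
  simp only [hpi, Fintype.card_piFinset, apply_ite Finset.card, card_singleton, card_univ,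
    Fintype.card_bool, prod_ite, prod_const_one, one_mul, prod_const]
  congr 1
  omega

lemma toggle_mem_subCubeCut_iff {s : Cube d} (hs : s ∈ subCubeCut d j) (i : Fin d) :
    toggle i s ∈ subCubeCut d j ↔ j ≤ i := by
  simp only [subCubeCut, mem_filter, mem_univ, true_and] at hs ⊢
  constructor
  · intro h
    by_contra hij
    simpa [hs i (not_le.mp hij)] using h i (not_le.mp hij)
  · intro h k hk
    rw [toggle_apply_of_ne s (by rintro rfl; omega)]
    exact hs k hk

lemma toggle_injOn_subCubeCut :
    Set.InjOn (fun p : Cube d × Fin d => toggle p.2 p.1) ↑(subCubeCut d j ×ˢ firstCoords d j) := by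
  rintro ⟨s, i⟩ hsi ⟨s', i'⟩ hsi' h
  simp only [mem_coe, mem_product, mem_firstCoords, subCubeCut, mem_filter, mem_univ,
    true_and] at hsi hsi' h
  have hi : i = i' := by
    by_contra hne
    simpa [hsi.1 i hsi.2, hsi'.1 i hsi.2, hne] using congrFun h i
  subst hi
  refine Prod.ext (funext fun k => ?_) rfl
  by_cases hk : k = i
  · subst hk
    exact (hsi.1 k hsi.2).trans (hsi'.1 k hsi.2).symm
  · simpa [hk] using congrFun h k

def edgeBoundary (Y : Finset (Cube d)) : Finset (Cube d × Cube d) :=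
  {p ∈ Y ×ˢ Yᶜ | hamm p.1 p.2 = 1}

lemma card_edgeBoundary_subCubeCut_le (hj : j ≤ d) :
    #(edgeBoundary (subCubeCut d j)) ≤ #(subCubeCut d j) * j := by
  have hsub : edgeBoundary (subCubeCut d j) ⊆
      (subCubeCut d j ×ˢ firstCoords d j).image fun p => (p.1, toggle p.2 p.1) := by
    rintro ⟨s, t⟩ hst
    simp only [edgeBoundary, mem_filter, mem_product, mem_compl] at hst
    obtain ⟨⟨hs, ht⟩, hamm_st⟩ := hst
    obtain ⟨i, rfl⟩ := exists_toggle_of_hamm_eq_one hamm_st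
    rw [toggle_mem_subCubeCut_iff hs, not_le] at ht
    exact mem_image.mpr ⟨(s, i), by simp [hs, ht]⟩
  calc #(edgeBoundary (subCubeCut d j))
      ≤ #(subCubeCut d j ×ˢ firstCoords d j) := (card_le_card hsub).trans card_image_le
    _ = #(subCubeCut d j) * j := by rw [card_product, card_firstCoords hj]

lemma card_inter_subCubeCut_mul_le (hj : j ≤ d) (Y : Finset (Cube d)) :
    (#(subCubeCut d j ∩ Y) * j : ℝ) ≤
      #(edgeBoundary Y) + Real.sqrt d * #(Y \ subCubeCut d j) := by
  set S := subCubeCut d j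
  set P := (S ∩ Y) ×ˢ firstCoords d j
  set P₁ := P.filter fun p => toggle p.2 p.1 ∉ Y
  set P₂ := P.filter fun p => toggle p.2 p.1 ∈ Y
  have hP₁ : #P₁ ≤ #(edgeBoundary Y) := by
    refine card_le_card_of_injOn (fun p => (p.1, toggle p.2 p.1)) ?_ ?_
    · rintro ⟨s, i⟩ hp
      simp_all [P₁, P, edgeBoundary, hamm_toggle]
    · rintro ⟨s, i⟩ - ⟨s', i'⟩ - h
      obtain ⟨rfl, h⟩ := Prod.mk.inj h
      exact Prod.ext rfl (toggle_left_injective s h)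
  have hP₂ : #P₂ ≤ #(Y \ S) := by
    refine card_le_card_of_injOn (fun p => toggle p.2 p.1) ?_ ?_
    · rintro ⟨s, i⟩ hp
      simp only [P₂, P, coe_filter, mem_product, mem_inter, mem_firstCoords,
        Set.mem_ofPred_eq] at hp
      rw [mem_coe, mem_sdiff, toggle_mem_subCubeCut_iff hp.1.1.1, not_le]
      exact ⟨hp.2, hp.1.2⟩
    · exact toggle_injOn_subCubeCut.mono <| coe_subset.mpr <|
        (filter_subset _ _).trans (product_subset_product_left inter_subset_left)
  have hP₂_sqrt : (#P₂ : ℝ) ≤ Real.sqrt d * #(Y \ S) := by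
    rcases P₂.eq_empty_or_nonempty with h | ⟨⟨_, i⟩, -⟩
    · simp only [h, card_empty, Nat.cast_zero]
      positivity
    · have hd : 1 ≤ Real.sqrt d := Real.one_le_sqrt.mpr (by exact_mod_cast i.pos)
      calc (#P₂ : ℝ) ≤ #(Y \ S) := by exact_mod_cast hP₂
        _ ≤ Real.sqrt d * #(Y \ S) := le_mul_of_one_le_left (by positivity) hd
  have hcardP : (#P : ℝ) = #(S ∩ Y) * j := by
    rw [card_product, card_firstCoords hj, Nat.cast_mul]
  have hsplit : (#P : ℝ) = #P₂ + #P₁ := by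
    exact_mod_cast (card_filter_add_card_filter_not (s := P) fun p => toggle p.2 p.1 ∈ Y).symm
  rw [← hcardP, hsplit]
  linarith [show (#P₁ : ℝ) ≤ #(edgeBoundary Y) by exact_mod_cast hP₁]

end Cube

lemma Finset.compl_disjSum {α β : Type*} [Fintype α] [Fintype β] [DecidableEq α]
    [DecidableEq β] (s : Finset α) (t : Finset β) : (s.disjSum t)ᶜ = sᶜ.disjSum tᶜ := by
  ext (a | b) <;> simp

section Cut

open Cube

variable {d j : ℕ}

lemma cutFun_disjSum (Y Z : Finset (Cube d)) :
    cutFun (gCap d) (Y.disjSum Z) =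
      #(edgeBoundary Y) + Real.sqrt d * (#(Y \ Z) + #(Z \ Y)) := by
  simp only [cutFun, compl_disjSum, sum_disjSum, gCap, sum_const_zero, add_zero,
    sum_ite_eq, mem_compl]
  rw [sum_add_distrib, ← sum_product' (f := fun s t => if hamm s t = 1 then (1 : ℝ) else 0),
    sum_boole, sum_ite, sum_ite, ← sdiff_eq_filter, ← sdiff_eq_filter]
  simp only [sum_const, nsmul_eq_mul, edgeBoundary]
  ring

lemma disjSum_inter_Kset (Y Z : Finset (Cube d)) :
    Y.disjSum Z ∩ Kset d = Z.image Sum.inr := by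
  ext (a | b) <;> simp [Kset]

lemma eq_disjSum_of_inter_Kset {A : Finset (Vtx d)} {Z : Finset (Cube d)}
    (hA : A ∩ Kset d = Z.image Sum.inr) : A = A.toLeft.disjSum Z := by
  ext (a | b)
  · simp
  · simpa [Kset] using Finset.ext_iff.mp hA (Sum.inr b)

lemma card_subCubeCut_mul_min_le_cutFun (hj : j ≤ d) (Y : Finset (Cube d)) :
    #(subCubeCut d j) * min (j : ℝ) (Real.sqrt d) ≤
      cutFun (gCap d) (Y.disjSum (subCubeCut d j)) := by
  set S := subCubeCut d j
  have hsplit : (#S : ℝ) = #(S \ Y) + #(S ∩ Y) := by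
    exact_mod_cast (card_sdiff_add_card_inter S Y).symm
  have hcharge := card_inter_subCubeCut_mul_le hj Y
  have hmin_j : (#(S ∩ Y) : ℝ) * min (j : ℝ) (Real.sqrt d) ≤ #(S ∩ Y) * j :=
    mul_le_mul_of_nonneg_left (min_le_left _ _) (by positivity)
  have hmin_sqrt : (#(S \ Y) : ℝ) * min (j : ℝ) (Real.sqrt d) ≤ #(S \ Y) * Real.sqrt d :=
    mul_le_mul_of_nonneg_left (min_le_right _ _) (by positivity)
  rw [cutFun_disjSum, hsplit]
  nlinarith [Real.sqrt_nonneg d]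

lemma exists_cutFun_disjSum_subCubeCut_le (hj : j ≤ d) :
    ∃ Y : Finset (Cube d), cutFun (gCap d) (Y.disjSum (subCubeCut d j)) ≤
      #(subCubeCut d j) * min (j : ℝ) (Real.sqrt d) := by
  rcases le_total (j : ℝ) (Real.sqrt d) with h | h
  · refine ⟨subCubeCut d j, ?_⟩
    rw [cutFun_disjSum, sdiff_self, bot_eq_empty, card_empty, min_eq_left h]
    simp only [Nat.cast_zero, add_zero, mul_zero]
    exact_mod_cast card_edgeBoundary_subCubeCut_le hj
  · refine ⟨∅, ?_⟩
    rw [cutFun_disjSum, min_eq_right h]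
    simp [edgeBoundary, mul_comm]

theorem hK_subCubeCut (hj : j ≤ d) :
    hK d (subCubeCut d j) = 2 ^ (d - j) * min (j : ℝ) (Real.sqrt d) := by
  have hcard : (#(subCubeCut d j) : ℝ) = 2 ^ (d - j) := by exact_mod_cast card_subCubeCut hj
  rw [hK, termCut, ← hcard]
  have hlower : ∀ x ∈ {x | ∃ A, A ∩ Kset d = (subCubeCut d j).image Sum.inr ∧
      cutFun (gCap d) A = x}, #(subCubeCut d j) * min (j : ℝ) (Real.sqrt d) ≤ x := by
    rintro _ ⟨A, hA, rfl⟩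
    rw [eq_disjSum_of_inter_Kset hA]
    exact card_subCubeCut_mul_min_le_cutFun hj _
  obtain ⟨Y, hY⟩ := exists_cutFun_disjSum_subCubeCut_le hj
  have hY_mem := disjSum_inter_Kset Y (subCubeCut d j)
  exact le_antisymm ((csInf_le ⟨_, hlower⟩ ⟨_, hY_mem, rfl⟩).trans hY)
    (le_csInf ⟨_, _, hY_mem, rfl⟩ hlower)

end Cut

/-- There are universal constants `c₁, c₂ > 0` such that for every
`d ≥ 1` and every `1 ≤ j ≤ d`, the minimum cut of `G_d` separating the sub-cube cut
`A_j` from `K - A_j` has capacity `Θ(2^{d-j} · min(j, √d))`. -/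
theorem subcube_cut_capacity :
    ∃ c₁ c₂ : ℝ, 0 < c₁ ∧ 0 < c₂ ∧ ∀ d : ℕ, 1 ≤ d → ∀ j : ℕ, 1 ≤ j → j ≤ d →
      c₁ * 2 ^ (d - j) * min (j : ℝ) (Real.sqrt d) ≤ hK d (subCubeCut d j) ∧
      hK d (subCubeCut d j) ≤ c₂ * 2 ^ (d - j) * min (j : ℝ) (Real.sqrt d) := by
  refine ⟨1, 1, one_pos, one_pos, fun d _ j _ hjd => ?_⟩
  rw [hK_subCubeCut hjd, one_mul]
  exact ⟨le_rfl, le_rfl⟩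
end
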